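/- Let p ∈ [1,∞) and let φ be a nonnegative function in L¹_loc(0,∞) with ∫₀^∞ t^{1/p−1} φ(t) dt < ∞. Then for every f ∈ H_a^p(ℂ₊) and every x ∈ ℝ, the nontangential maximal function satisfies the pointwise bound 𝓜(𝓗_φ f)(x) ≤ H_φ(𝓜 f)(x), where H_φ(𝓜 f)(x) = ∫₀^∞ 𝓜f(x/t) φ(t)/t dt. -/

import Mathlib

open MeasureTheory Complex Filter Set Topology ENNReal NNReal

/-- The Hardy norm on the upper half-plane: `sup_{y>0} ‖f (· + iy)‖_{L^p(ℝ)}`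
(for `p = ∞` this is the sup norm, via the essential supremum on each horizontal line). -/
noncomputable def hardyNorm (p : ℝ≥0∞) (f : ℂ → ℂ) : ℝ≥0∞ :=
  ⨆ y ∈ Set.Ioi (0 : ℝ), eLpNorm (fun x : ℝ => f (x + y * Complex.I)) p volume

/-- Membership in the holomorphic Hardy space `H_a^p(ℂ₊)`. -/
def MemHardy (p : ℝ≥0∞) (f : ℂ → ℂ) : Prop :=
  DifferentiableOn ℂ f {z : ℂ | 0 < z.im} ∧ hardyNorm p f < ⊤

/-- The Hausdorff operator on holomorphic functions on the upper half-plane: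
`𝓗_φ f (z) = ∫₀^∞ f(z/t) φ(t)/t dt`. -/
noncomputable def hausdorffC (φ : ℝ → ℝ) (f : ℂ → ℂ) (z : ℂ) : ℂ :=
  ∫ t in Set.Ioi (0 : ℝ), (φ t / t) • f (z / (t : ℂ))

/-- The nontangential maximal function `𝓜 f (x) = sup_{|t-x|<y} |f(t+iy)|`. -/
noncomputable def ntMax (f : ℂ → ℂ) (x : ℝ) : ℝ≥0∞ :=
  ⨆ (t : ℝ) (y : ℝ) (_ : |t - x| < y), (‖f (t + y * Complex.I)‖₊ : ℝ≥0∞)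

theorem enorm_le_ntMax (f : ℂ → ℂ) {x t y : ℝ} (h : |t - x| < y) :
    ‖f (t + y * I)‖ₑ ≤ ntMax f x :=
  le_iSup_of_le t <| le_iSup_of_le y <| le_iSup_of_le h le_rfl

/-- Dilation by `1 / s` maps the cone with vertex `x` onto the cone with vertex `x / s`. -/
theorem enorm_comp_div_le_ntMax_div (f : ℂ → ℂ) {x t y s : ℝ} (hs : 0 < s)
    (h : |t - x| < y) : ‖f ((t + y * I) / s)‖ₑ ≤ ntMax f (x / s) := by
  have hdiv : ((t + y * I) / s : ℂ) = ↑(t / s) + ↑(y / s) * I := by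
    push_cast
    ring
  have hcone : |t / s - x / s| < y / s := by
    rw [div_sub_div_same, abs_div, abs_of_pos hs]
    exact div_lt_div_of_pos_right h hs
  rw [hdiv]
  exact enorm_le_ntMax f hcone

theorem enorm_hausdorffC_le {φ : ℝ → ℝ} (hφ : ∀ t, 0 ≤ φ t) (f : ℂ → ℂ) (z : ℂ) :
    ‖hausdorffC φ f z‖ₑ ≤ ∫⁻ t in Ioi (0 : ℝ), ENNReal.ofReal (φ t / t) * ‖f (z / t)‖ₑ := by
  refine (enorm_integral_le_lintegral_enorm _).trans <|
    setLIntegral_mono_ae' measurableSet_Ioi <| ae_of_all _ fun t (ht : 0 < t) => ?_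
  rw [enorm_smul, Real.enorm_eq_ofReal (div_nonneg (hφ t) ht.le)]

theorem ntMax_hausdorff_le_general
    (φ : ℝ → ℝ) (hφ : ∀ t, 0 ≤ φ t)
    (f : ℂ → ℂ) (x : ℝ) :
    ntMax (hausdorffC φ f) x ≤
      ∫⁻ t in Set.Ioi (0 : ℝ), ENNReal.ofReal (φ t / t) * ntMax f (x / t) := by
  refine iSup_le fun t => iSup_le fun y => iSup_le fun hty => ?_
  calc ‖hausdorffC φ f (t + y * I)‖ₑ
      ≤ ∫⁻ s in Ioi (0 : ℝ), ENNReal.ofReal (φ s / s) * ‖f ((t + y * I) / s)‖ₑ :=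
        enorm_hausdorffC_le hφ f _
    _ ≤ ∫⁻ s in Ioi (0 : ℝ), ENNReal.ofReal (φ s / s) * ntMax f (x / s) :=
        setLIntegral_mono_ae' measurableSet_Ioi <| ae_of_all _ fun s (hs : 0 < s) => by
          gcongr
          exact enorm_comp_div_le_ntMax_div f hs hty

/-- Pointwise bound in the proof of Lemma 2.3(i): `𝓜(𝓗_φ f)(x) ≤ H_φ(𝓜 f)(x)`. -/
theorem ntMax_hausdorff_le (p : ℝ≥0∞) (hp : 1 ≤ p) (hptop : p ≠ ⊤)
    (φ : ℝ → ℝ) (hφ : ∀ t, 0 ≤ φ t)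
    (hloc : LocallyIntegrableOn φ (Set.Ioi 0))
    (hint : IntegrableOn (fun t : ℝ => t ^ ((1 / p).toReal - 1) * φ t) (Set.Ioi 0))
    (f : ℂ → ℂ) (hf : MemHardy p f) (x : ℝ) :
    ntMax (hausdorffC φ f) x ≤
      ∫⁻ t in Set.Ioi (0 : ℝ), ENNReal.ofReal (φ t / t) * ntMax f (x / t) :=
  ntMax_hausdorff_le_general φ hφ f x
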